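/- Let k ≥ 4 be an integer and let T be a connected signed graph without multiple edges such that Δ(T) ≤ k − 1, every block of T is a brick, and T is not a balanced complete graph of order k. Then (k − 2 + 2/(k−1))·|V(T)| − 2·|E(T)| ≥ 2. -/

import Mathlib

open scoped Classical

/-- A signed graph: a finite loopless multigraph together with a sign `+1` or `-1`
on each edge. -/
structure SignedGraph where
  /-- vertex type -/
  V : Type
  /-- edge type -/
  E : Type
  fintypeV : Fintype V
  fintypeE : Fintype E
  decEqV : DecidableEq V
  /-- the two (distinct) endpoints of an edge, as an unordered pair -/
  ends : E → Sym2 V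
  loopless : ∀ e : E, ¬ (ends e).IsDiag
  /-- the sign of an edge -/
  sign : E → ℤ
  sign_unit : ∀ e : E, sign e = 1 ∨ sign e = -1

attribute [instance] SignedGraph.fintypeV SignedGraph.fintypeE SignedGraph.decEqV

namespace SignedGraph

variable (G : SignedGraph)

/-- The degree of a vertex: the number of edges incident with it. -/
noncomputable def degree (v : G.V) : ℕ :=
  (Finset.univ.filter (fun e : G.E => v ∈ G.ends e)).card

/-- The maximum degree `Δ(G)`. -/
noncomputable def maxDegree : ℕ :=
  Finset.univ.sup (fun v : G.V => G.degree v)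

/-- Two vertices are adjacent if some edge joins them. -/
def Adj (v w : G.V) : Prop := ∃ e : G.E, G.ends e = s(v, w)

/-- The simple graph of the adjacency relation (underlying simplification). -/
def adjGraph : SimpleGraph G.V where
  Adj := G.Adj
  symm := ⟨fun _ _ h => by obtain ⟨e, he⟩ := h; exact ⟨e, he.trans (Sym2.eq_swap)⟩⟩
  loopless := ⟨fun v h => by
    obtain ⟨e, he⟩ := h
    exact G.loopless e (by rw [he]; exact Sym2.mk_isDiag_iff.mpr rfl)⟩

/-- A signed graph is connected if its underlying graph is connected. -/
def Connected : Prop := G.adjGraph.Connected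

/-- The underlying graph is simple: no two parallel edges. -/
def SimpleUnderlying : Prop := ∀ e f : G.E, G.ends e = G.ends f → e = f

/-- A (proper) coloring of a signed graph. -/
def IsColoring (φ : G.V → ℤ) : Prop :=
  ∀ (e : G.E) (v w : G.V), G.ends e = s(v, w) → φ v ≠ G.sign e * φ w

/-- The color set `Z_k`:  `Z_{2h} = {±1, …, ±h}` and `Z_{2h+1} = Z_{2h} ∪ {0}`. -/
def ZSet (k : ℕ) : Set ℤ := {x : ℤ | 2 * |x| ≤ (k : ℤ) ∧ (x = 0 → Odd k)}

/-- The signed chromatic number `χ±(G)`: the least `k` such that `G` admits a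
coloring with image contained in `Z_k`. -/
noncomputable def signedChromaticNumber : ℕ :=
  sInf {k : ℕ | ∃ φ : G.V → ℤ, G.IsColoring φ ∧ ∀ v : G.V, φ v ∈ ZSet k}

/-- `G` admits a coloring from the lists `L`. -/
def ListColorable (L : G.V → Finset ℤ) : Prop :=
  ∃ φ : G.V → ℤ, G.IsColoring φ ∧ ∀ v : G.V, φ v ∈ L v

/-- The signed choice number `χℓ±(G)`. -/
noncomputable def signedChoiceNumber : ℕ :=
  sInf {k : ℕ | ∀ L : G.V → Finset ℤ, (∀ v : G.V, (L v).card = k) → G.ListColorable L}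

/-- `G` is degree choosable. -/
def DegreeChoosable : Prop :=
  ∀ L : G.V → Finset ℤ, (∀ v : G.V, (L v).card = G.degree v) → G.ListColorable L

/-- `(G, L)` is an uncolorable pair. -/
def UncolorablePair (L : G.V → Finset ℤ) : Prop :=
  G.Connected ∧ (∀ v : G.V, G.degree v ≤ (L v).card) ∧ ¬ G.ListColorable L

/-- Walks in a signed multigraph. -/
inductive Walk (G : SignedGraph) : G.V → G.V → Type
  | nil (v : G.V) : Walk G v v
  | cons {v w u : G.V} (e : G.E) (he : G.ends e = s(v, w)) (p : Walk G w u) : Walk G v u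

namespace Walk

variable {G}

/-- The list of edges of a walk. -/
def edges : ∀ {v w : G.V}, Walk G v w → List G.E
  | _, _, .nil _ => []
  | _, _, .cons e _ p => e :: edges p

/-- The list of vertices of a walk. -/
def support : ∀ {v w : G.V}, Walk G v w → List G.V
  | _, _, .nil v => [v]
  | v, _, .cons _ _ p => v :: support p

/-- The length of a walk. -/
def length {v w : G.V} (p : Walk G v w) : ℕ := p.edges.length

/-- The sign product of a walk. -/
def signProd {v w : G.V} (p : Walk G v w) : ℤ := (p.edges.map G.sign).prod

/-- A cycle: a nonempty closed walk with no repeated edges and no repeated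
vertices (except the first = last). -/
def IsCycle {v : G.V} (p : Walk G v v) : Prop :=
  p.edges ≠ [] ∧ p.edges.Nodup ∧ p.support.tail.Nodup

end Walk

/-- A signed graph is balanced if every cycle has positive sign product. -/
def Balanced : Prop := ∀ (v : G.V) (p : Walk G v v), p.IsCycle → p.signProd = 1

/-- A signed graph is antibalanced if every even cycle has positive sign product
and every odd cycle has negative sign product. -/
def Antibalanced : Prop :=
  ∀ (v : G.V) (p : Walk G v v), p.IsCycle → p.signProd = (-1) ^ p.length

/-- `G` is balanced with parts `X`, `Y`: the vertex set is the disjoint union of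
`X` and `Y` and an edge is negative iff it joins `X` to `Y`. -/
def BalancedWithParts (X Y : Set G.V) : Prop :=
  X ∪ Y = Set.univ ∧ Disjoint X Y ∧
  ∀ (e : G.E) (v w : G.V), G.ends e = s(v, w) →
    (G.sign e = -1 ↔ (v ∈ X ∧ w ∈ Y) ∨ (v ∈ Y ∧ w ∈ X))

/-- The underlying graph is a complete (simple) graph. -/
def IsCompleteGraph : Prop :=
  G.SimpleUnderlying ∧ ∀ v w : G.V, v ≠ w → G.Adj v w

/-- `G` is a balanced complete graph. -/
def IsBalancedComplete : Prop := G.IsCompleteGraph ∧ G.Balanced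

/-- The underlying graph is a cycle. -/
def IsCycleGraph : Prop :=
  G.Connected ∧ G.SimpleUnderlying ∧ ∀ v : G.V, G.degree v = 2

/-- `G` is a balanced odd cycle. -/
def IsBalancedOddCycle : Prop :=
  G.IsCycleGraph ∧ G.Balanced ∧ Odd (Fintype.card G.V)

/-- `G` is an unbalanced even cycle. -/
def IsUnbalancedEvenCycle : Prop :=
  G.IsCycleGraph ∧ ¬ G.Balanced ∧ Even (Fintype.card G.V)

/-- Every edge of `G` comes in a pair of parallel edges of opposite sign, and
any two vertices are joined by at most two edges. -/
def Doubled : Prop :=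
  ∀ (e : G.E) (v w : G.V), G.ends e = s(v, w) →
    ∃ f : G.E, f ≠ e ∧ G.ends f = s(v, w) ∧ G.sign f = - G.sign e ∧
      ∀ g : G.E, G.ends g = s(v, w) → g = e ∨ g = f

/-- `G` is a `2Kₙ` for some `n ≥ 2`. -/
def IsDoubleComplete : Prop :=
  2 ≤ Fintype.card G.V ∧ G.Doubled ∧ ∀ v w : G.V, v ≠ w → G.Adj v w

/-- `G` is a `2Cₙ` for some odd `n ≥ 3`. -/
def IsDoubleOddCycle : Prop :=
  G.Connected ∧ G.Doubled ∧ (∀ v : G.V, G.degree v = 4) ∧ Odd (Fintype.card G.V)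

/-- A brick. -/
def IsBrick : Prop :=
  G.IsBalancedComplete ∨ G.IsBalancedOddCycle ∨ G.IsUnbalancedEvenCycle ∨
    G.IsDoubleComplete ∨ G.IsDoubleOddCycle

/-- A subgraph of a signed graph. -/
structure Subgraph (G : SignedGraph) where
  verts : Set G.V
  edges : Set G.E
  ends_mem : ∀ e ∈ edges, ∀ v ∈ G.ends e, v ∈ verts

namespace Subgraph

variable {G}

/-- A subgraph, regarded as a signed graph in its own right. -/
noncomputable def toSG (H : G.Subgraph) : SignedGraph where
  V := H.verts
  E := H.edges
  fintypeV := Fintype.ofFinite _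
  fintypeE := Fintype.ofFinite _
  decEqV := inferInstance
  ends := fun e =>
    s((⟨(G.ends e.1).out.1, H.ends_mem e.1 e.2 _ (Sym2.out_fst_mem _)⟩ : H.verts),
      (⟨(G.ends e.1).out.2, H.ends_mem e.1 e.2 _ (Sym2.out_snd_mem _)⟩ : H.verts))
  loopless := fun e h => by
    rw [Sym2.mk_isDiag_iff, Subtype.mk.injEq] at h
    exact G.loopless e.1 (by
      rw [← (G.ends e.1).out_eq]
      exact Sym2.mk_isDiag_iff.mpr h)
  sign := fun e => G.sign e.1
  sign_unit := fun e => G.sign_unit e.1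

/-- Delete a vertex (and all incident edges) from a subgraph. -/
def delete (H : G.Subgraph) (v : G.V) : G.Subgraph where
  verts := H.verts \ {v}
  edges := {e ∈ H.edges | v ∉ G.ends e}
  ends_mem := fun e he w hw =>
    ⟨H.ends_mem e he.1 w hw, fun h => he.2 (by rwa [Set.mem_singleton_iff.mp h] at hw)⟩

/-- Subgraph inclusion. -/
def Le (H K : G.Subgraph) : Prop := H.verts ⊆ K.verts ∧ H.edges ⊆ K.edges

/-- `v` is a separating (cut) vertex of the subgraph `H`. -/
def IsCutVertex (H : G.Subgraph) (v : G.V) : Prop :=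
  v ∈ H.verts ∧ (H.delete v).verts.Nonempty ∧ ¬ (H.delete v).toSG.Connected

/-- `B` is a block of `G`: a maximal connected subgraph without a cut vertex. -/
def IsBlock (B : G.Subgraph) : Prop :=
  B.toSG.Connected ∧ (∀ v : G.V, ¬ B.IsCutVertex v) ∧
  ∀ B' : G.Subgraph, B.Le B' → B'.toSG.Connected →
    (∀ v : G.V, ¬ B'.IsCutVertex v) → B'.Le B

/-- The degree of a vertex in a subgraph. -/
noncomputable def degree (H : G.Subgraph) (v : G.V) : ℕ :=
  (Finset.univ.filter (fun e : G.E => e ∈ H.edges ∧ v ∈ G.ends e)).card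

/-- The minimum degree of a subgraph. -/
noncomputable def minDegree (H : G.Subgraph) : ℕ :=
  sInf {d : ℕ | ∃ v ∈ H.verts, H.degree v = d}

/-- The subgraph admits a coloring from the lists `L`. -/
def ListColorable (H : G.Subgraph) (L : G.V → Finset ℤ) : Prop :=
  ∃ φ : G.V → ℤ,
    (∀ e ∈ H.edges, ∀ v w : G.V, G.ends e = s(v, w) → φ v ≠ G.sign e * φ w) ∧
    ∀ v ∈ H.verts, φ v ∈ L v

/-- A proper subgraph. -/
def IsProper (H : G.Subgraph) : Prop :=
  H.verts ≠ Set.univ ∨ H.edges ≠ Set.univ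

end Subgraph

/-- The subgraph consisting of all of `G`. -/
def topSubgraph : G.Subgraph := ⟨Set.univ, Set.univ, fun _ _ _ _ => trivial⟩

/-- A separating (cut) vertex of `G`. -/
def IsCutVertex (v : G.V) : Prop := G.topSubgraph.IsCutVertex v

/-- The coloring number `col(G)`: one plus the maximum over all (nonempty)
subgraphs of the minimum degree. -/
noncomputable def coloringNumber : ℕ :=
  1 + sSup {d : ℕ | ∃ H : G.Subgraph, H.verts.Nonempty ∧ H.minDegree = d}

/-- The subgraph induced by a vertex set `X`. -/
def induced (X : Set G.V) : G.Subgraph where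
  verts := X
  edges := {e : G.E | ∀ v ∈ G.ends e, v ∈ X}
  ends_mem := fun e he v hv => he v hv

/-- `G` is `L`-critical. -/
def LCritical (L : G.V → Finset ℤ) : Prop :=
  ¬ G.ListColorable L ∧ ∀ H : G.Subgraph, H.IsProper → H.ListColorable L

/-- `G` is `k`-critical (with respect to the signed chromatic number). -/
def KCritical (k : ℕ) : Prop :=
  G.signedChromaticNumber = k ∧
  ∀ H : G.Subgraph, H.IsProper → H.toSG.signedChromaticNumber ≤ k - 1

/-- `G` is `k`-list-critical. -/
def KListCritical (k : ℕ) : Prop :=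
  ∃ L : G.V → Finset ℤ, (∀ v : G.V, (L v).card = k - 1) ∧ G.LCritical L

/-- The signed graph `2H` obtained from a simple graph `H` by replacing every
edge by a pair of parallel edges, one positive and one negative. -/
noncomputable def double {W : Type} [Fintype W] [DecidableEq W] (H : SimpleGraph W) :
    SignedGraph where
  V := W
  E := H.edgeSet × Bool
  fintypeV := inferInstance
  fintypeE := Fintype.ofFinite _
  decEqV := inferInstance
  ends := fun e => e.1.1
  loopless := fun e => H.not_isDiag_of_mem_edgeSet e.1.2
  sign := fun e => if e.2 then 1 else -1
  sign_unit := fun e => by by_cases h : e.2 <;> simp [h]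

end SignedGraph

/-!
Induct on vertex sets `X` spanning a subtree of the block–cut-vertex tree of `T`, starting from
`X = V(T)`, and show that the excess `c |X| - 2 |E(T[X])|`, where `c = k - 2 + 2 / (k - 1)`, is at
least `2`. If `X` has no cut vertex, `T[X]` is a block, hence a brick, and since `T` is simple it
is a cycle or a balanced `K_t`. Here `t ≤ k - 1`: either `X = V(T)` and `T` is not a balanced
`K_k`, or some vertex of `X` has an edge leaving `X`. Both kinds of brick have excess at least
`2`, with equality for `K_{k-1}` because `c (k - 1) = (k - 1) (k - 2) + 2`.

Otherwise take a leaf block `B = C ∪ {v}` with cut vertex `v`. Deleting `C` lowers the excess by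
`excess B - c`. If this is negative, `B` is a `K_{k-1}` (or a triangle when `k = 4`), so `v` has
degree `k - 2` in `B` and exactly one edge leaving `B`, and deleting all of `B` lowers the excess
by `excess B - 2 ≥ 0`.
-/

namespace SimpleGraph

variable {V : Type*} {G : SimpleGraph V}

def ConnectedOn (G : SimpleGraph V) (S : Set V) : Prop :=
  S.Nonempty ∧ ∀ x ∈ S, ∀ y ∈ S, ∃ p : G.Walk x y, ∀ z ∈ p.support, z ∈ S

def IsClosedExcept (G : SimpleGraph V) (X C : Set V) (v : V) : Prop :=
  ∀ x ∈ C, ∀ y ∈ X, G.Adj x y → y ≠ v → y ∈ C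

/-- `C` is a connected component of `S \ {v}`; its maximality is the field `closed`. -/
structure IsComponentOfDiff (G : SimpleGraph V) (S : Set V) (v : V) (C : Set V) : Prop where
  subset : C ⊆ S
  mem : v ∈ S
  notMem : v ∉ C
  connectedOn : G.ConnectedOn C
  closed : G.IsClosedExcept S C v

def IsCutVertexOn (G : SimpleGraph V) (S : Set V) (w : V) : Prop :=
  w ∈ S ∧ (S \ {w}).Nonempty ∧ ¬ G.ConnectedOn (S \ {w})

/-- `X` spans a subtree of the block–cut-vertex tree: it is connected, and everything outside
`X` hangs off `X` at a single vertex. -/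
def IsBlockSubtree (G : SimpleGraph V) (X : Set V) : Prop :=
  G.ConnectedOn X ∧
    ∀ z ∉ X, ∃ v ∈ X, ∃ D, G.IsComponentOfDiff Set.univ v D ∧ z ∈ D ∧ Disjoint D X

namespace Walk

variable {X C : Set V} {v a b : V}

lemma exists_adj_of_isClosedExcept (hC : G.IsClosedExcept X C v) (p : G.Walk a b)
    (hp : ∀ z ∈ p.support, z ∈ X) (ha : a ∈ C) (hb : b ∉ C) :
    ∃ x ∈ C, G.Adj x v ∧ v ∈ p.support := by
  obtain ⟨d, hd, hd₁, hd₂⟩ := p.exists_boundary_dart C ha hb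
  have hsnd := p.dart_snd_mem_support_of_mem_darts hd
  by_contra hv
  exact hd₂ (hC _ hd₁ _ (hp _ hsnd) d.adj fun h => hv ⟨_, hd₁, h ▸ d.adj, h ▸ hsnd⟩)

lemma mem_support_of_isClosedExcept (hC : G.IsClosedExcept X C v) (p : G.Walk a b)
    (hp : ∀ z ∈ p.support, z ∈ X) (ha : a ∈ C) (hb : b ∉ C) : v ∈ p.support :=
  let ⟨_, _, _, h⟩ := p.exists_adj_of_isClosedExcept hC hp ha hb
  h

lemma mem_of_isClosedExcept (hC : G.IsClosedExcept X C v) (p : G.Walk a b)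
    (hp : ∀ z ∈ p.support, z ∈ X) (ha : a ∈ C) (hv : v ∉ p.support) : b ∈ C := by
  by_contra hb
  exact hv (p.mem_support_of_isClosedExcept hC hp ha hb)

lemma IsPath.eq_of_mem_takeUntil_of_mem_dropUntil [DecidableEq V] {z : V} {p : G.Walk a b}
    (hp : p.IsPath) (hz : z ∈ p.support) (h₁ : v ∈ (p.takeUntil z hz).support)
    (h₂ : v ∈ (p.dropUntil z hz).support) : v = z := by
  have hnd := hp.support_nodup
  rw [← p.take_spec hz, support_append, List.nodup_append] at hnd
  rw [← cons_tail_support, List.mem_cons] at h₂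
  exact h₂.resolve_right fun h => hnd.2.2 v h₁ v h rfl

end Walk

lemma ConnectedOn.of_forall_walk {S : Set V} {h : V} (hh : h ∈ S)
    (hwalk : ∀ x ∈ S, ∃ p : G.Walk x h, ∀ z ∈ p.support, z ∈ S) : G.ConnectedOn S := by
  refine ⟨⟨h, hh⟩, fun x hx y hy => ?_⟩
  obtain ⟨p, hp⟩ := hwalk x hx
  obtain ⟨q, hq⟩ := hwalk y hy
  refine ⟨p.append q.reverse, fun z hz => ?_⟩
  rw [Walk.mem_support_append_iff, Walk.support_reverse, List.mem_reverse] at hz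
  exact hz.elim (hp z) (hq z)

lemma ConnectedOn.of_forall_walk_from {S : Set V} {h : V} (hh : h ∈ S)
    (hwalk : ∀ x ∈ S, ∃ p : G.Walk h x, ∀ z ∈ p.support, z ∈ S) : G.ConnectedOn S :=
  .of_forall_walk hh fun x hx =>
    let ⟨p, hp⟩ := hwalk x hx
    ⟨p.reverse, fun z hz => hp z (by rwa [Walk.support_reverse, List.mem_reverse] at hz)⟩

def componentOfDiff (G : SimpleGraph V) (S : Set V) (v x : V) : Set V :=
  {z | ∃ p : G.Walk x z, ∀ u ∈ p.support, u ∈ S ∧ u ≠ v}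

lemma mem_componentOfDiff_self {S : Set V} {v x : V} (hx : x ∈ S) (hxv : x ≠ v) :
    x ∈ G.componentOfDiff S v x :=
  ⟨.nil, by simp [hx, hxv]⟩

lemma isComponentOfDiff_componentOfDiff {S : Set V} {v x : V} (hv : v ∈ S) (hx : x ∈ S)
    (hxv : x ≠ v) : G.IsComponentOfDiff S v (G.componentOfDiff S v x) := by
  have hsupp : ∀ {y} (p : G.Walk x y), (∀ u ∈ p.support, u ∈ S ∧ u ≠ v) →
      ∀ u ∈ p.support, u ∈ G.componentOfDiff S v x := fun p hp u hu =>
    ⟨p.takeUntil u hu, fun w hw => hp w (p.support_takeUntil_subset_support hu hw)⟩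
  refine ⟨fun z ⟨p, hp⟩ => (hp z p.end_mem_support).1, hv,
    fun ⟨p, hp⟩ => (hp v p.end_mem_support).2 rfl,
    .of_forall_walk_from (mem_componentOfDiff_self hx hxv) fun z ⟨p, hp⟩ => ⟨p, hsupp p hp⟩,
    fun z ⟨p, hp⟩ y hy hadj hyv => ⟨p.concat hadj, fun u hu => ?_⟩⟩
  rw [Walk.support_concat, List.mem_append, List.mem_singleton] at hu
  exact hu.elim (hp u) fun h => h ▸ ⟨hy, hyv⟩

lemma IsCutVertexOn.exists_isComponentOfDiff_notMem {S : Set V} {w : V}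
    (hw : G.IsCutVertexOn S w) (u : V) : ∃ C, G.IsComponentOfDiff S w C ∧ u ∉ C := by
  obtain ⟨hwS, hne, hnc⟩ := hw
  obtain ⟨x, hx, y, hy, hxy⟩ : ∃ x ∈ S \ {w}, ∃ y ∈ S \ {w},
      ∀ p : G.Walk x y, ¬ ∀ z ∈ p.support, z ∈ S \ {w} := by
    by_contra! h
    exact hnc ⟨hne, h⟩
  have hdisj : ∀ z ∈ G.componentOfDiff S w x, z ∉ G.componentOfDiff S w y := by
    rintro z ⟨p, hp⟩ ⟨q, hq⟩
    refine hxy (p.append q.reverse) fun u hu => ?_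
    rw [Walk.mem_support_append_iff, Walk.support_reverse, List.mem_reverse] at hu
    exact hu.elim (hp u) (hq u)
  by_cases hu : u ∈ G.componentOfDiff S w x
  · exact ⟨_, isComponentOfDiff_componentOfDiff hwS hy.1 hy.2, hdisj u hu⟩
  · exact ⟨_, isComponentOfDiff_componentOfDiff hwS hx.1 hx.2, hu⟩

lemma IsComponentOfDiff.subset_of_connectedOn {S C D : Set V} {v d : V}
    (hC : G.IsComponentOfDiff S v C) (hD : G.ConnectedOn D) (hDS : D ⊆ S) (hvD : v ∉ D)
    (hdD : d ∈ D) (hdC : d ∈ C) : D ⊆ C := fun z hz =>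
  let ⟨p, hp⟩ := hD.2 d hdD z hz
  p.mem_of_isClosedExcept hC.closed (fun u hu => hDS (hp u hu)) hdC fun h => hvD (hp v h)

lemma exists_walk_sdiff_of_isClosedExcept {X S : Set V} {pt : V} (hS : G.IsClosedExcept X S pt)
    (hpt : pt ∉ S) : ∀ {x : V} (p : G.Walk x pt), (∀ z ∈ p.support, z ∈ X) → x ∉ S →
      ∃ q : G.Walk x pt, ∀ z ∈ q.support, z ∈ X \ S
  | _, .nil, hp, hx => ⟨.nil, by simpa using ⟨hp _ (by simp), hx⟩⟩
  | x, .cons (v := c) hadj p, hp, hx => by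
    by_cases hxpt : x = pt
    · subst hxpt
      exact ⟨.nil, by simpa using ⟨hp _ (by simp), hx⟩⟩
    have hc : c ∉ S := fun hc => hx (hS c hc x (hp x (by simp)) hadj.symm hxpt)
    obtain ⟨q, hq⟩ := exists_walk_sdiff_of_isClosedExcept hS hpt p
      (fun z hz => hp z (by simp [hz])) hc
    refine ⟨.cons hadj q, fun z hz => ?_⟩
    rw [Walk.support_cons, List.mem_cons] at hz
    exact hz.elim (fun h => h ▸ ⟨hp x (by simp), hx⟩) (hq z)

lemma ConnectedOn.sdiff {X S : Set V} {pt : V} (hX : G.ConnectedOn X) (hpt : pt ∈ X \ S)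
    (hS : G.IsClosedExcept X S pt) : G.ConnectedOn (X \ S) :=
  .of_forall_walk hpt fun x hx =>
    let ⟨p, hp⟩ := hX.2 x hx.1 pt hpt.1
    exists_walk_sdiff_of_isClosedExcept hS hpt.2 p hp hx.2

namespace IsBlockSubtree

variable {X : Set V} (hX : G.IsBlockSubtree X)
include hX

lemma support_subset_of_isPath {a b : V} {p : G.Walk a b} (hp : p.IsPath) (ha : a ∈ X)
    (hb : b ∈ X) : ∀ z ∈ p.support, z ∈ X := by
  intro z hz
  by_contra hzX
  obtain ⟨v, hvX, D, hD, hzD, hDX⟩ := hX.2 z hzX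
  -- the path enters and leaves the pendant part `D` through `v`, so it would visit `v` twice
  have hcl : G.IsClosedExcept Set.univ D v := hD.closed
  have h₁ : v ∈ (p.takeUntil z hz).support := by
    simpa using (p.takeUntil z hz).reverse.mem_support_of_isClosedExcept hcl (by simp) hzD
      (hDX.notMem_of_mem_right ha)
  have h₂ : v ∈ (p.dropUntil z hz).support :=
    (p.dropUntil z hz).mem_support_of_isClosedExcept hcl (by simp) hzD
      (hDX.notMem_of_mem_right hb)
  exact hzX (hp.eq_of_mem_takeUntil_of_mem_dropUntil hz h₁ h₂ ▸ hvX)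

lemma mem_of_walk {S : Set V} {pt s y : V} (hSX : S ⊆ X) (hS : G.IsClosedExcept X S pt)
    (hs : s ∈ S) (hy : y ∈ X) (p : G.Walk s y) (hpt : pt ∉ p.support) : y ∈ S := by
  have hsupp := p.support_toPath_subset_support
  exact p.toPath.1.mem_of_isClosedExcept hS
    (hX.support_subset_of_isPath p.toPath.2 (hSX hs) hy) hs fun h => hpt (hsupp h)

lemma sdiff (hG : G.Connected) {S : Set V} {pt : V} (hSX : S ⊆ X) (hpt : pt ∈ X \ S)
    (hS : G.IsClosedExcept X S pt) : G.IsBlockSubtree (X \ S) := by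
  refine ⟨hX.1.sdiff hpt hS, fun z hz => ?_⟩
  -- whatever reaches `S` without passing `pt` now hangs off `X \ S` at `pt`
  have hcomp : ∀ s ∈ S, ∀ p : G.Walk z s, pt ∉ p.support →
      ∃ v ∈ X \ S, ∃ D, G.IsComponentOfDiff Set.univ v D ∧ z ∈ D ∧ Disjoint D (X \ S) := by
    intro s hs p hp
    have hzpt : z ≠ pt := fun h => hp (h ▸ p.start_mem_support)
    refine ⟨pt, hpt, _, isComponentOfDiff_componentOfDiff trivial trivial hzpt,
      mem_componentOfDiff_self trivial hzpt, Set.disjoint_left.2 ?_⟩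
    rintro y ⟨q, hq⟩ hy
    exact hy.2 (hX.mem_of_walk hSX hS hs hy.1 (p.reverse.append q) fun h => by
      rw [Walk.mem_support_append_iff, Walk.support_reverse, List.mem_reverse] at h
      exact h.elim hp fun h => (hq pt h).2 rfl)
  by_cases hzX : z ∈ X
  · have hzS : z ∈ S := by_contra fun h => hz ⟨hzX, h⟩
    exact hcomp z hzS .nil (by simpa using fun h : pt = z => hpt.2 (h ▸ hzS))
  obtain ⟨v, hvX, D, hD, hzD, hDX⟩ := hX.2 z hzX
  by_cases hvS : v ∈ S
  · obtain ⟨d, hdD, hdv, -⟩ := (hG.preconnected z v).some.exists_adj_of_isClosedExcept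
      hD.closed (by simp) hzD (hDX.notMem_of_mem_right hvX)
    obtain ⟨p, hp⟩ := hD.connectedOn.2 z hzD d hdD
    refine hcomp v hvS (p.concat hdv) fun h => ?_
    rw [Walk.support_concat, List.mem_append, List.mem_singleton] at h
    exact h.elim (fun h => hDX.notMem_of_mem_right hpt.1 (hp pt h)) fun h => hpt.2 (h ▸ hvS)
  · exact ⟨v, ⟨hvX, hvS⟩, D, hD, hzD, hDX.mono_right Set.sdiff_subset⟩

lemma subset_of_connectedOn {S : Set V} (hS : G.ConnectedOn S)
    (hcut : ∀ w, ¬ G.IsCutVertexOn S w) {a b : V} (ha : a ∈ S ∩ X) (hb : b ∈ S ∩ X)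
    (hab : a ≠ b) : S ⊆ X := by
  intro z hz
  by_contra hzX
  obtain ⟨v, hvX, D, hD, hzD, hDX⟩ := hX.2 z hzX
  obtain ⟨x, hxS, hxX, hxv⟩ : ∃ x ∈ S, x ∈ X ∧ x ≠ v := by
    by_cases hav : a = v
    · exact ⟨b, hb.1, hb.2, fun h => hab (hav.trans h.symm)⟩
    · exact ⟨a, ha.1, ha.2, hav⟩
  have hvwalk : ∀ p : G.Walk x z, v ∈ p.support := fun p => by
    simpa using p.reverse.mem_support_of_isClosedExcept hD.closed (by simp) hzD
      (hDX.notMem_of_mem_right hxX)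
  obtain ⟨p, hp⟩ := hS.2 x hxS z hz
  have hzv : z ∈ S \ {v} := ⟨hz, fun h => hzX (Set.mem_singleton_iff.1 h ▸ hvX)⟩
  have hSv : G.ConnectedOn (S \ {v}) := by
    by_contra hnc
    exact hcut v ⟨hp v (hvwalk p), ⟨z, hzv⟩, hnc⟩
  obtain ⟨q, hq⟩ := hSv.2 x ⟨hxS, hxv⟩ z hzv
  exact (hq v (hvwalk q)).2 rfl

end IsBlockSubtree

namespace IsComponentOfDiff

variable {X C : Set V} {v : V} (hC : G.IsComponentOfDiff X v C)
include hC

lemma insert_subset : insert v C ⊆ X :=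
  Set.insert_subset hC.mem hC.subset

lemma isClosedExcept_diff_insert : G.IsClosedExcept X (X \ insert v C) v := by
  refine fun x hx y hy hxy hyv => ⟨hy, ?_⟩
  rintro (rfl | hyC)
  · exact hyv rfl
  · exact hx.2 (.inr (hC.closed y hyC x hx.1 hxy.symm fun h => hx.2 (.inl h)))

lemma sdiff_sdiff_insert (W : Set V) : (X \ W) \ (X \ insert v C) = insert v C \ W := by
  have := hC.insert_subset
  ext z
  constructor
  · rintro ⟨⟨hzX, hzW⟩, hz⟩
    exact ⟨by_contra fun h => hz ⟨hzX, h⟩, hzW⟩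
  · rintro ⟨hzB, hzW⟩
    exact ⟨⟨this hzB, hzW⟩, fun h => h.2 hzB⟩

lemma isBlockSubtree_insert (hG : G.Connected) (hX : G.IsBlockSubtree X) :
    G.IsBlockSubtree (insert v C) := by
  have h := hX.sdiff hG Set.sdiff_subset ⟨hC.mem, fun h => h.2 (.inl rfl)⟩
    hC.isClosedExcept_diff_insert
  rwa [Set.sdiff_sdiff_cancel_left hC.insert_subset] at h

lemma not_isCutVertexOn_insert (hleaf : ∀ w ∈ C, ¬ G.IsCutVertexOn X w)
    (w : V) : ¬ G.IsCutVertexOn (insert v C) w := by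
  rintro ⟨hwB, -, hnc⟩
  apply hnc
  rcases hwB with rfl | hwC
  · rw [Set.insert_sdiff_self_of_notMem hC.notMem]
    exact hC.connectedOn
  have hvw : v ≠ w := fun h => hC.notMem (h ▸ hwC)
  have hXw : G.ConnectedOn (X \ {w}) := by
    by_contra h
    exact hleaf w hwC ⟨hC.subset hwC, ⟨v, hC.mem, hvw⟩, h⟩
  rw [← hC.sdiff_sdiff_insert]
  exact hXw.sdiff ⟨⟨hC.mem, hvw⟩, fun h => h.2 (.inl rfl)⟩
    fun x hx y hy => hC.isClosedExcept_diff_insert x hx y hy.1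

lemma exists_adj_sdiff_insert (hX : G.ConnectedOn X) (hv : G.IsCutVertexOn X v) :
    ∃ u ∈ X \ insert v C, G.Adj v u := by
  obtain ⟨u₀, hu₀⟩ : (X \ insert v C).Nonempty := by
    by_contra! h
    have hXB : X = insert v C := (Set.sdiff_eq_empty.1 h).antisymm hC.insert_subset
    refine hv.2.2 ?_
    rw [hXB, Set.insert_sdiff_self_of_notMem hC.notMem]
    exact hC.connectedOn
  obtain ⟨p, hp⟩ := hX.2 v hC.mem u₀ hu₀.1
  obtain ⟨d, hd, hd₁, hd₂⟩ := p.exists_boundary_dart (insert v C) (.inl rfl) hu₀.2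
  have hsnd := hp _ (p.dart_snd_mem_support_of_mem_darts hd)
  rcases hd₁ with hd₁ | hd₁
  · exact ⟨d.snd, ⟨hsnd, hd₂⟩, hd₁ ▸ d.adj⟩
  · exact absurd (.inr (hC.closed _ hd₁ _ hsnd d.adj fun h => hd₂ (.inl h))) hd₂

end IsComponentOfDiff

lemma ConnectedOn.exists_leaf [Finite V] {X : Set V} (hX : G.ConnectedOn X)
    (hcut : ∃ w, G.IsCutVertexOn X w) :
    ∃ v C, G.IsCutVertexOn X v ∧ G.IsComponentOfDiff X v C ∧
      ∀ w ∈ C, ¬ G.IsCutVertexOn X w := by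
  have hP : ∃ n v C, G.IsCutVertexOn X v ∧ G.IsComponentOfDiff X v C ∧ C.ncard = n := by
    obtain ⟨w, hw⟩ := hcut
    obtain ⟨C, hC, -⟩ := hw.exists_isComponentOfDiff_notMem w
    exact ⟨_, w, C, hw, hC, rfl⟩
  obtain ⟨v, C, hv, hC, hn⟩ := Nat.find_spec hP
  refine ⟨v, C, hv, hC, fun w hwC hw => ?_⟩
  obtain ⟨D, hD, hvD⟩ := hw.exists_isComponentOfDiff_notMem v
  obtain ⟨d₁, hd₁⟩ := hD.connectedOn.1
  obtain ⟨p, hp⟩ := hX.2 d₁ (hD.subset hd₁) w hw.1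
  obtain ⟨d, hdD, hdw, -⟩ := p.exists_adj_of_isClosedExcept hD.closed hp hd₁ hD.notMem
  have hdC : d ∈ C := hC.closed w hwC d (hD.subset hdD) hdw.symm fun h => hvD (h ▸ hdD)
  have hDC := hC.subset_of_connectedOn hD.connectedOn hD.subset hvD hdD hdC
  have hlt : D.ncard < C.ncard :=
    Set.ncard_lt_ncard ⟨hDC, fun h => hD.notMem (h hwC)⟩ (Set.toFinite C)
  exact Nat.find_min hP (hn ▸ hlt) ⟨w, D, hw, hD, rfl⟩

lemma Connected.isBlockSubtree_univ (hG : G.Connected) : G.IsBlockSubtree Set.univ :=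
  ⟨⟨let ⟨v⟩ := hG.nonempty; ⟨v, trivial⟩,
      fun x _ y _ => ⟨(hG.preconnected x y).some, fun _ _ => trivial⟩⟩,
    fun _ hz => absurd trivial hz⟩

end SimpleGraph

namespace SignedGraph

variable {T : SignedGraph}

lemma exists_ends_eq (e : T.E) : ∃ x y, T.ends e = s(x, y) ∧ x ≠ y := by
  induction h : T.ends e using Sym2.ind with
  | _ x y =>
    exact ⟨x, y, rfl, fun hxy => T.loopless e (by rw [h, hxy]; exact Sym2.mk_isDiag_iff.2 rfl)⟩

lemma exists_ends_eq_of_mem {e : T.E} {v : T.V} (h : v ∈ T.ends e) :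
    ∃ w, T.ends e = s(v, w) ∧ w ≠ v := by
  obtain ⟨w, hw⟩ := Sym2.mem_iff_exists.1 h
  exact ⟨w, hw, fun hwv => T.loopless e (by rw [hw, hwv]; exact Sym2.mk_isDiag_iff.2 rfl)⟩

lemma mem_induced_edges {X : Set T.V} {e : T.E} {x y : T.V} (he : T.ends e = s(x, y)) :
    e ∈ (T.induced X).edges ↔ x ∈ X ∧ y ∈ X := by
  change (∀ z ∈ T.ends e, z ∈ X) ↔ _
  simp [he, Sym2.mem_iff]

lemma induced_edges_mono {X Y : Set T.V} (h : X ⊆ Y) :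
    (T.induced X).edges ⊆ (T.induced Y).edges := fun _ he z hz => h (he z hz)

lemma Subgraph.degree_le (H : T.Subgraph) (v : T.V) : H.degree v ≤ T.degree v :=
  Finset.card_le_card fun e he => by simp_all

lemma degree_lt_degree_of_mem {H : T.Subgraph} {v : T.V} {e : T.E} (hv : v ∈ T.ends e)
    (he : e ∉ H.edges) : H.degree v < T.degree v :=
  Finset.card_lt_card ⟨fun f hf => by simp_all, fun h => he (by simpa [hv] using @h e)⟩

lemma eq_of_degree_le_succ {H : T.Subgraph} {v : T.V} (hdeg : T.degree v ≤ H.degree v + 1)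
    {e₀ e : T.E} (he₀ : v ∈ T.ends e₀) (he₀H : e₀ ∉ H.edges) (he : v ∈ T.ends e)
    (heH : e ∉ H.edges) : e = e₀ := by
  have hsub : Finset.univ.filter (fun e => e ∈ H.edges ∧ v ∈ T.ends e) ⊆
      Finset.univ.filter (fun e => v ∈ T.ends e) := fun e he => by simp_all
  have hcard := Finset.card_sdiff_add_card_eq_card hsub
  have hle : ((Finset.univ.filter fun e => v ∈ T.ends e) \
      (Finset.univ.filter fun e => e ∈ H.edges ∧ v ∈ T.ends e)).card ≤ 1 := by
    unfold degree Subgraph.degree at hdeg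
    omega
  exact Finset.card_le_one.1 hle e (by simp [*]) e₀ (by simp [*])

namespace Subgraph

variable {H : T.Subgraph}

lemma map_val_toSG_ends (e : H.toSG.E) : Sym2.map Subtype.val (H.toSG.ends e) = T.ends e.1 := by
  change Sym2.map Subtype.val s(_, _) = _
  rw [Sym2.map_mk]
  exact (T.ends e.1).out_eq

lemma mem_toSG_ends (e : H.toSG.E) (w : H.toSG.V) : w ∈ H.toSG.ends e ↔ w.1 ∈ T.ends e.1 := by
  rw [← map_val_toSG_ends e]
  exact ⟨fun h => Sym2.mem_map.2 ⟨w, h, rfl⟩, fun h =>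
    let ⟨a, ha, hav⟩ := Sym2.mem_map.1 h
    (Subtype.ext hav : a = w) ▸ ha⟩

lemma toSG_ends_eq_iff (e : H.toSG.E) {a b : H.toSG.V} :
    H.toSG.ends e = s(a, b) ↔ T.ends e.1 = s(a.1, b.1) := by
  rw [← map_val_toSG_ends e]
  exact ⟨fun h => h ▸ Sym2.map_mk .., fun h =>
    Sym2.map.injective Subtype.val_injective (h.trans (Sym2.map_mk ..).symm)⟩

lemma toSG_adj_iff (a b : H.toSG.V) :
    H.toSG.Adj a b ↔ ∃ e ∈ H.edges, T.ends e = s(a.1, b.1) :=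
  ⟨fun ⟨e, he⟩ => ⟨e.1, e.2, (toSG_ends_eq_iff e).1 he⟩,
    fun ⟨e, he, h⟩ => ⟨⟨e, he⟩, (toSG_ends_eq_iff ⟨e, he⟩).2 h⟩⟩

lemma toSG_simpleUnderlying (hs : T.SimpleUnderlying) (H : T.Subgraph) :
    H.toSG.SimpleUnderlying := fun e f h =>
  Subtype.ext (hs _ _ (by rw [← map_val_toSG_ends e, ← map_val_toSG_ends f, h]))

lemma card_toSG_V (H : T.Subgraph) : Fintype.card H.toSG.V = H.verts.ncard :=
  Nat.card_eq_fintype_card.symm.trans (Nat.card_coe_set_eq _)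

lemma card_toSG_E (H : T.Subgraph) : Fintype.card H.toSG.E = H.edges.ncard :=
  Nat.card_eq_fintype_card.symm.trans (Nat.card_coe_set_eq _)

lemma toSG_degree (w : H.toSG.V) : H.toSG.degree w = H.degree w.1 :=
  Finset.card_bij' (fun e _ => e.1) (fun e he => ⟨e, (Finset.mem_filter.1 he).2.1⟩)
    (fun e he => Finset.mem_filter.2 ⟨Finset.mem_univ _, e.2,
      (mem_toSG_ends e w).1 (Finset.mem_filter.1 he).2⟩)
    (fun e he => Finset.mem_filter.2 ⟨Finset.mem_univ _,
      (mem_toSG_ends ⟨e, _⟩ w).2 (Finset.mem_filter.1 he).2.2⟩)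
    (fun _ _ => rfl) (fun _ _ => rfl)

lemma connectedOn_verts (hc : H.toSG.Connected) : T.adjGraph.ConnectedOn H.verts := by
  refine ⟨let ⟨x⟩ := hc.nonempty; ⟨x.1, x.2⟩, fun x hx y hy => ?_⟩
  let φ : H.toSG.adjGraph →g T.adjGraph :=
    ⟨Subtype.val, fun {a b} h => let ⟨e, _, he⟩ := (toSG_adj_iff a b).1 h; ⟨e, he⟩⟩
  refine ⟨((hc.preconnected ⟨x, hx⟩ ⟨y, hy⟩).some.map φ), fun z hz => ?_⟩
  erw [SimpleGraph.Walk.support_map] at hz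
  obtain ⟨w, -, rfl⟩ := List.mem_map.1 hz
  exact w.2

def IsInduced (H : T.Subgraph) : Prop :=
  ∀ e : T.E, (∀ x ∈ T.ends e, x ∈ H.verts) → e ∈ H.edges

lemma isInduced_induced (X : Set T.V) : (T.induced X).IsInduced := fun _ he => he

lemma IsInduced.delete (hH : H.IsInduced) (w : T.V) : (H.delete w).IsInduced := fun e he =>
  ⟨hH e fun x hx => (he x hx).1, fun hwe => (he w hwe).2 rfl⟩

lemma IsInduced.connected (hH : H.IsInduced) (h : T.adjGraph.ConnectedOn H.verts) :
    H.toSG.Connected := by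
  obtain ⟨⟨x₀, hx₀⟩, hconn⟩ := h
  have : Nonempty H.toSG.V := ⟨⟨x₀, hx₀⟩⟩
  refine .mk fun ⟨x, hx⟩ ⟨y, hy⟩ => ?_
  obtain ⟨p, hp⟩ := hconn x hx y hy
  clear hconn
  induction p with
  | nil => rfl
  | @cons u c w h q ih =>
    have hc : c ∈ H.verts := hp c (by simp)
    have hreach := ih hc hy fun z hz => hp z (by simp [hz])
    obtain ⟨e, he⟩ := h
    have hadj : H.toSG.adjGraph.Adj ⟨u, hx⟩ ⟨c, hc⟩ := (toSG_adj_iff _ _).2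
      ⟨e, hH e fun z hz => by rcases Sym2.mem_iff.1 (he ▸ hz) with rfl | rfl <;> assumption, he⟩
    exact hadj.reachable.trans hreach

lemma not_isCutVertexOn_of_not_isCutVertex {v : T.V} (h : ¬ H.IsCutVertex v) :
    ¬ T.adjGraph.IsCutVertexOn H.verts v :=
  fun ⟨hv, hne, hnc⟩ => h ⟨hv, hne, fun hc => hnc (connectedOn_verts hc)⟩

end Subgraph

open Subgraph

lemma isBlock_induced {X : Set T.V} (hX : T.adjGraph.IsBlockSubtree X) (hX2 : 1 < X.ncard)
    (hcut : ∀ w, ¬ T.adjGraph.IsCutVertexOn X w) : (T.induced X).IsBlock := by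
  refine ⟨(isInduced_induced X).connected hX.1, fun w ⟨hw, hne, hnc⟩ => hnc ?_,
    fun B hle hB hBcut => ?_⟩
  · exact ((isInduced_induced X).delete w).connected (by_contra fun h => hcut w ⟨hw, hne, h⟩)
  · obtain ⟨a, b, ha, hb, hab⟩ := (Set.one_lt_ncard_iff X.toFinite).1 hX2
    have hsub : B.verts ⊆ X := hX.subset_of_connectedOn (connectedOn_verts hB)
      (fun v => not_isCutVertexOn_of_not_isCutVertex (hBcut v)) ⟨hle.1 ha, ha⟩ ⟨hle.1 hb, hb⟩ hab
    exact ⟨hsub, fun e he x hx => hsub (B.ends_mem e he x hx)⟩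

section Bricks

variable {H : SignedGraph}

lemma sum_degree (H : SignedGraph) : ∑ v, H.degree v = 2 * Fintype.card H.E := by
  have hends : ∀ e : H.E, (∑ v : H.V, if v ∈ H.ends e then 1 else 0) = 2 := fun e => by
    obtain ⟨x, y, hxy, hne⟩ := exists_ends_eq e
    rw [← Finset.card_filter, show Finset.univ.filter (· ∈ H.ends e) = {x, y} by
      ext v; simp [hxy, Sym2.mem_iff], Finset.card_pair hne]
  simp only [degree, Finset.card_filter]
  rw [Finset.sum_comm]
  simp only [hends, Finset.sum_const, Finset.card_univ, smul_eq_mul, mul_comm]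

lemma IsCompleteGraph.degree_eq (h : H.IsCompleteGraph) (v : H.V) :
    H.degree v = Fintype.card H.V - 1 := by
  have hother : ∀ e : {e : H.E // v ∈ H.ends e}, ∃ w, H.ends e.1 = s(v, w) ∧ w ≠ v :=
    fun e => exists_ends_eq_of_mem e.2
  choose f hf using hother
  have hbij : Function.Bijective fun e => (⟨f e, (hf e).2⟩ : {w : H.V // w ≠ v}) := by
    refine ⟨fun e₁ e₂ heq => Subtype.ext (h.1 _ _ ?_), fun ⟨w, hw⟩ => ?_⟩
    · rw [(hf e₁).1, (hf e₂).1, Subtype.mk.inj heq]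
    · obtain ⟨e, he⟩ := h.2 v w hw.symm
      have hv : v ∈ H.ends e := he ▸ Sym2.mem_mk_left v w
      refine ⟨⟨e, hv⟩, Subtype.ext ?_⟩
      have := (hf ⟨e, hv⟩).1
      rw [he, Sym2.eq_iff] at this
      exact this.elim (fun h => h.2.symm) fun h => absurd h.1.symm (hf ⟨e, hv⟩).2
  rw [degree, ← Fintype.card_subtype, Fintype.card_congr (Equiv.ofBijective _ hbij),
    Fintype.card_subtype_compl, Fintype.card_subtype_eq]

lemma IsCycleGraph.card_E (h : H.IsCycleGraph) : Fintype.card H.E = Fintype.card H.V := by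
  have := H.sum_degree
  simp only [h.2.2, Finset.sum_const, Finset.card_univ, smul_eq_mul] at this
  omega

lemma IsCycleGraph.three_le_card (h : H.IsCycleGraph) : 3 ≤ Fintype.card H.V := by
  obtain ⟨v⟩ := h.1.nonempty
  have hv : (Finset.univ.filter fun e => v ∈ H.ends e).card = 2 := h.2.2 v
  obtain ⟨e₁, he₁, e₂, he₂, hne⟩ := Finset.one_lt_card.1 (hv ▸ one_lt_two)
  obtain ⟨a, ha, hav⟩ := exists_ends_eq_of_mem (Finset.mem_filter.1 he₁).2
  obtain ⟨b, hb, hbv⟩ := exists_ends_eq_of_mem (Finset.mem_filter.1 he₂).2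
  have hab : a ≠ b := fun hab => hne (h.2.1 e₁ e₂ (by rw [ha, hb, hab]))
  calc 3 = ({v, a, b} : Finset H.V).card := by
        rw [Finset.card_insert_of_notMem (by simp [hav.symm, hbv.symm]), Finset.card_pair hab]
    _ ≤ Fintype.card H.V := Finset.card_le_univ _

lemma isEmpty_E_of_doubled (hs : H.SimpleUnderlying) (hd : H.Doubled) : IsEmpty H.E := by
  refine ⟨fun e => ?_⟩
  obtain ⟨x, y, hxy, -⟩ := exists_ends_eq e
  obtain ⟨f, hfe, hf, -⟩ := hd e x y hxy
  exact hfe (hs f e (hf.trans hxy.symm))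

lemma IsBrick.isBalancedComplete_or_isCycleGraph (hb : H.IsBrick) (hs : H.SimpleUnderlying) :
    H.IsBalancedComplete ∨ H.IsCycleGraph := by
  rcases hb with h | h | h | ⟨hcard, hd, hadj⟩ | ⟨hconn, hd, hdeg, -⟩
  · exact .inl h
  · exact .inr h.1
  · exact .inr h.1
  · have := isEmpty_E_of_doubled hs hd
    obtain ⟨v, w, hvw⟩ := Fintype.exists_pair_of_one_lt_card hcard
    exact isEmptyElim (hadj v w hvw).choose
  · have := isEmpty_E_of_doubled hs hd
    obtain ⟨v⟩ := hconn.nonempty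
    have := hdeg v
    simp [degree] at this

end Bricks

lemma IsBalancedComplete.induced_degree {X : Set T.V}
    (h : (T.induced X).toSG.IsBalancedComplete) {v : T.V} (hv : v ∈ X) :
    (T.induced X).degree v = X.ncard - 1 :=
  (toSG_degree (H := T.induced X) ⟨v, hv⟩).symm.trans
    ((h.1.degree_eq _).trans (congrArg (· - 1) (card_toSG_V _)))

lemma IsBrick.induced_cases (hs : T.SimpleUnderlying) {X : Set T.V}
    (hB : (T.induced X).toSG.IsBrick) :
    ((T.induced X).toSG.IsBalancedComplete ∧
        (2 : ℚ) * (T.induced X).edges.ncard = X.ncard * (X.ncard - 1)) ∨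
      ((∀ v ∈ X, (T.induced X).degree v = 2) ∧ (T.induced X).edges.ncard = X.ncard ∧
        3 ≤ X.ncard) := by
  have hV : Fintype.card (T.induced X).toSG.V = X.ncard := card_toSG_V _
  have hE : Fintype.card (T.induced X).toSG.E = (T.induced X).edges.ncard := card_toSG_E _
  rcases hB.isBalancedComplete_or_isCycleGraph (toSG_simpleUnderlying hs _) with h | h
  · have := (T.induced X).toSG.sum_degree
    simp only [h.1.degree_eq, Finset.sum_const, Finset.card_univ, smul_eq_mul] at this
    rw [hV, hE] at this
    refine .inl ⟨h, ?_⟩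
    rcases Nat.eq_zero_or_pos X.ncard with h0 | h0
    · simp_all
    · have := congrArg (Nat.cast (R := ℚ)) this
      push_cast [Nat.cast_sub h0] at this
      linarith
  · refine .inr ⟨fun v hv => (toSG_degree (H := T.induced X) ⟨v, hv⟩).symm.trans (h.2.2 _),
      by rw [← hE, ← hV, h.card_E], hV ▸ h.three_le_card⟩

def univVert (T : SignedGraph) (v : T.V) : (T.induced Set.univ).toSG.V :=
  ⟨v, Set.mem_univ v⟩

def univEdge (T : SignedGraph) (e : T.E) : (T.induced Set.univ).toSG.E :=
  ⟨e, fun x _ => Set.mem_univ x⟩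

def Walk.toInducedUniv : ∀ {a b : T.V}, T.Walk a b →
    (T.induced Set.univ).toSG.Walk (T.univVert a) (T.univVert b)
  | _, _, .nil v => .nil (T.univVert v)
  | _, _, .cons (v := v) (w := w) e he p => .cons (T.univEdge e)
      ((Subgraph.toSG_ends_eq_iff (T.univEdge e) (a := T.univVert v) (b := T.univVert w)).2 he)
      p.toInducedUniv

lemma Walk.edges_toInducedUniv : ∀ {a b : T.V} (p : T.Walk a b),
    p.toInducedUniv.edges = p.edges.map T.univEdge
  | _, _, .nil _ => rfl
  | _, _, .cons e _ p => by
    change T.univEdge e :: p.toInducedUniv.edges = _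
    rw [p.edges_toInducedUniv]
    rfl

lemma Walk.support_toInducedUniv : ∀ {a b : T.V} (p : T.Walk a b),
    p.toInducedUniv.support = p.support.map T.univVert
  | _, _, .nil _ => rfl
  | a, _, .cons _ _ p => by
    change T.univVert a :: p.toInducedUniv.support = _
    rw [p.support_toInducedUniv]
    rfl

lemma balanced_of_balanced_induced_univ (h : (T.induced Set.univ).toSG.Balanced) :
    T.Balanced := by
  intro v p ⟨hne, hedges, hsupp⟩
  have hcyc : p.toInducedUniv.IsCycle := by
    refine ⟨?_, ?_, ?_⟩
    · simpa [Walk.edges_toInducedUniv] using hne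
    · rw [Walk.edges_toInducedUniv]
      exact hedges.map fun _ _ h => congrArg Subtype.val h
    · rw [Walk.support_toInducedUniv, ← List.map_tail]
      exact hsupp.map fun _ _ h => congrArg Subtype.val h
  have := h _ _ hcyc
  rwa [Walk.signProd, Walk.edges_toInducedUniv, List.map_map] at this

lemma isBalancedComplete_of_induced_univ (h : (T.induced Set.univ).toSG.IsBalancedComplete)
    (hs : T.SimpleUnderlying) : T.IsBalancedComplete := by
  refine ⟨⟨hs, fun v w hvw => ?_⟩, balanced_of_balanced_induced_univ h.2⟩
  obtain ⟨e, -, he⟩ := (Subgraph.toSG_adj_iff (T.univVert v) (T.univVert w)).1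
    (h.1.2 _ _ fun h => hvw (congrArg Subtype.val h))
  exact ⟨e, he⟩

lemma ncard_induced_edges_of_isClosedExcept {X S : Set T.V} {pt : T.V} (hSX : S ⊆ X)
    (hpt : pt ∈ X) (hS : T.adjGraph.IsClosedExcept X S pt) :
    (T.induced X).edges.ncard =
      (T.induced (X \ S)).edges.ncard + (T.induced (insert pt S)).edges.ncard := by
  have hunion : (T.induced X).edges =
      (T.induced (X \ S)).edges ∪ (T.induced (insert pt S)).edges := by
    refine subset_antisymm (fun e he => ?_) (Set.union_subset (induced_edges_mono
      Set.sdiff_subset) (induced_edges_mono (Set.insert_subset hpt hSX)))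
    obtain ⟨x, y, hxy, -⟩ := exists_ends_eq e
    rw [mem_induced_edges hxy] at he
    simp only [Set.mem_union, mem_induced_edges hxy, Set.mem_sdiff, Set.mem_insert_iff]
    by_cases hx : x ∈ S
    · exact .inr ⟨.inr hx, (em (y = pt)).imp_right fun h => hS x hx y he.2 ⟨e, hxy⟩ h⟩
    by_cases hy : y ∈ S
    · exact .inr ⟨(em (x = pt)).imp_right fun h =>
        hS y hy x he.1 ⟨e, hxy.trans Sym2.eq_swap⟩ h, .inr hy⟩
    · exact .inl ⟨⟨he.1, hx⟩, he.2, hy⟩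
  have hinter : (T.induced (X \ S)).edges ∩ (T.induced (insert pt S)).edges = ∅ := by
    refine Set.eq_empty_of_forall_notMem fun e ⟨he₁, he₂⟩ => ?_
    obtain ⟨x, y, hxy, hne⟩ := exists_ends_eq e
    rw [mem_induced_edges hxy] at he₁ he₂
    have hx := he₂.1.resolve_right he₁.1.2
    have hy := he₂.2.resolve_right he₁.2.2
    exact hne (hx.trans hy.symm)
  have := Set.ncard_union_add_ncard_inter (T.induced (X \ S)).edges
    (T.induced (insert pt S)).edges
  rw [← hunion, hinter, Set.ncard_empty] at this
  omega

lemma ncard_induced_edges_of_unique_cross {X S : Set T.V} (hSX : S ⊆ X) {a b : T.V}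
    (ha : a ∈ S) (hb : b ∈ X \ S) {e₀ : T.E} (he₀ : T.ends e₀ = s(a, b))
    (huniq : ∀ e x y, x ∈ S → y ∈ X \ S → T.ends e = s(x, y) → e = e₀) :
    (T.induced X).edges.ncard =
      (T.induced (X \ S)).edges.ncard + (T.induced S).edges.ncard + 1 := by
  have hinsert : (T.induced X).edges =
      insert e₀ ((T.induced (X \ S)).edges ∪ (T.induced S).edges) := by
    refine subset_antisymm (fun e he => ?_) (Set.insert_subset
      ((mem_induced_edges he₀).2 ⟨hSX ha, hb.1⟩) (Set.union_subset
        (induced_edges_mono Set.sdiff_subset) (induced_edges_mono hSX)))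
    obtain ⟨x, y, hxy, -⟩ := exists_ends_eq e
    rw [mem_induced_edges hxy] at he
    simp only [Set.mem_insert_iff, Set.mem_union, mem_induced_edges hxy, Set.mem_sdiff]
    by_cases hx : x ∈ S <;> by_cases hy : y ∈ S
    · exact .inr (.inr ⟨hx, hy⟩)
    · exact .inl (huniq e x y hx ⟨he.2, hy⟩ hxy)
    · exact .inl (huniq e y x hy ⟨he.1, hx⟩ (hxy.trans Sym2.eq_swap))
    · exact .inr (.inl ⟨⟨he.1, hx⟩, he.2, hy⟩)
  have hdisj : Disjoint (T.induced (X \ S)).edges (T.induced S).edges :=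
    Set.disjoint_left.2 fun e he₁ he₂ =>
      (he₁ _ (Sym2.out_fst_mem (T.ends e))).2 (he₂ _ (Sym2.out_fst_mem (T.ends e)))
  have hnotin : e₀ ∉ (T.induced (X \ S)).edges ∪ (T.induced S).edges := by
    simp only [Set.mem_union, mem_induced_edges he₀, Set.mem_sdiff]
    exact fun h => h.elim (fun h => h.1.2 ha) fun h => hb.2 h.2
  rw [hinsert, Set.ncard_insert_of_notMem hnotin, Set.ncard_union_eq hdisj]

noncomputable def gallaiCoeff (k : ℕ) : ℚ := k - 2 + 2 / ((k : ℚ) - 1)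

noncomputable def excess (T : SignedGraph) (k : ℕ) (X : Set T.V) : ℚ :=
  gallaiCoeff k * X.ncard - 2 * (T.induced X).edges.ncard

section Arithmetic

variable {k : ℕ} (hk : 4 ≤ k)
include hk

lemma three_le_cast_sub_one : (3 : ℚ) ≤ k - 1 := by
  have : (4 : ℚ) ≤ k := by exact_mod_cast hk
  linarith

lemma div_mul_sub_one_eq_two : 2 / ((k : ℚ) - 1) * ((k : ℚ) - 1) = 2 :=
  div_mul_cancel₀ 2 (by linarith [three_le_cast_sub_one hk])

lemma div_sub_one_pos : 0 < 2 / ((k : ℚ) - 1) :=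
  div_pos two_pos (by linarith [three_le_cast_sub_one hk])

lemma div_sub_one_le_one : 2 / ((k : ℚ) - 1) ≤ 1 :=
  (div_le_one (by linarith [three_le_cast_sub_one hk])).2 (by linarith [three_le_cast_sub_one hk])

lemma two_le_gallaiCoeff : 2 ≤ gallaiCoeff k := by
  have := three_le_cast_sub_one hk
  have := div_sub_one_pos hk
  unfold gallaiCoeff
  linarith

lemma two_le_gallaiCoeff_mul_sub_complete {t : ℚ} (ht₁ : 1 ≤ t) (ht : t ≤ k - 1) :
    2 ≤ gallaiCoeff k * t - t * (t - 1) := by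
  have hr := div_mul_sub_one_eq_two hk
  have := div_sub_one_le_one hk
  have hprod : 0 ≤ (t - 2 / ((k : ℚ) - 1)) * (k - 1 - t) :=
    mul_nonneg (by linarith) (by linarith)
  unfold gallaiCoeff
  nlinarith

lemma two_le_gallaiCoeff_mul_sub_cycle {n : ℚ} (hn : 3 ≤ n) : 2 ≤ gallaiCoeff k * n - 2 * n := by
  have := three_le_cast_sub_one hk
  have hr := div_mul_sub_one_eq_two hk
  have hrpos := div_sub_one_pos hk
  have h₃ : 0 ≤ 3 * (k - 4) + 3 * (2 / ((k : ℚ) - 1)) - 2 := by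
    nlinarith [mul_nonneg (by linarith : (0 : ℚ) ≤ 3 * k - 5) (by linarith : (0 : ℚ) ≤ k - 4)]
  unfold gallaiCoeff
  nlinarith [mul_nonneg (by linarith : (0 : ℚ) ≤ n - 3) (by linarith : (0 : ℚ) ≤ k - 4),
    mul_nonneg (by linarith : (0 : ℚ) ≤ n - 3) hrpos.le]

lemma sub_two_lt_of_gallaiCoeff_mul_lt {t : ℚ} (ht : 1 ≤ t)
    (hlt : gallaiCoeff k * t - t * (t - 1) < gallaiCoeff k) : (k : ℚ) - 2 < t := by
  have := div_sub_one_pos hk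
  by_contra! h
  have : t ≤ gallaiCoeff k := by unfold gallaiCoeff; linarith
  nlinarith [mul_nonneg (by linarith : (0 : ℚ) ≤ t - 1) (by linarith : 0 ≤ gallaiCoeff k - t)]

lemma eq_four_of_gallaiCoeff_mul_lt {n : ℚ} (hn : 3 ≤ n)
    (hlt : gallaiCoeff k * n - 2 * n < gallaiCoeff k) : k = 4 := by
  by_contra hne
  have hk5 : (5 : ℚ) ≤ k := by exact_mod_cast (show 5 ≤ k by omega)
  have := div_sub_one_pos hk
  have : 3 ≤ gallaiCoeff k := by unfold gallaiCoeff; linarith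
  nlinarith [mul_nonneg (by linarith : (0 : ℚ) ≤ n - 1) (by linarith : 0 ≤ gallaiCoeff k - 3)]

end Arithmetic

variable {k : ℕ}

lemma excess_of_ncard_eq_one {X : Set T.V} (h : X.ncard = 1) : T.excess k X = gallaiCoeff k := by
  obtain ⟨x, rfl⟩ := Set.ncard_eq_one.1 h
  have hE : (T.induced {x}).edges = ∅ := Set.eq_empty_of_forall_notMem fun e he => by
    obtain ⟨a, b, hab, hne⟩ := exists_ends_eq e
    rw [mem_induced_edges hab, Set.mem_singleton_iff, Set.mem_singleton_iff] at he
    exact hne (he.1.trans he.2.symm)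
  simp [excess, hE]

lemma excess_eq_of_isClosedExcept {X S : Set T.V} {pt : T.V} (hSX : S ⊆ X) (hpt : pt ∈ X \ S)
    (hS : T.adjGraph.IsClosedExcept X S pt) :
    T.excess k X = T.excess k (X \ S) + T.excess k (insert pt S) - gallaiCoeff k := by
  have hV : X.ncard = (X \ S).ncard + S.ncard := (Set.ncard_sdiff_add_ncard_of_subset hSX).symm
  have hE := ncard_induced_edges_of_isClosedExcept hSX hpt.1 hS
  rw [excess, excess, excess, Set.ncard_insert_of_notMem hpt.2, hE, hV]
  push_cast
  ring

lemma excess_eq_of_unique_cross {X S : Set T.V} (hSX : S ⊆ X) {a b : T.V} (ha : a ∈ S)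
    (hb : b ∈ X \ S) {e₀ : T.E} (he₀ : T.ends e₀ = s(a, b))
    (huniq : ∀ e x y, x ∈ S → y ∈ X \ S → T.ends e = s(x, y) → e = e₀) :
    T.excess k X = T.excess k (X \ S) + T.excess k S - 2 := by
  have hV : X.ncard = (X \ S).ncard + S.ncard := (Set.ncard_sdiff_add_ncard_of_subset hSX).symm
  have hE := ncard_induced_edges_of_unique_cross hSX ha hb he₀ huniq
  rw [excess, excess, excess, hE, hV]
  push_cast
  ring

lemma two_le_excess_of_isBrick (hk : 4 ≤ k) (hs : T.SimpleUnderlying) {X : Set T.V}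
    (hB : (T.induced X).toSG.IsBrick) (hX : X.Nonempty)
    (hsmall : (T.induced X).toSG.IsBalancedComplete → X.ncard ≤ k - 1) : 2 ≤ T.excess k X := by
  have hX1 : 1 ≤ X.ncard := (Set.ncard_pos X.toFinite).2 hX
  unfold excess
  rcases hB.induced_cases hs with ⟨hc, hE⟩ | ⟨-, hE, h3⟩
  · have := two_le_gallaiCoeff_mul_sub_complete hk (t := X.ncard) (by exact_mod_cast hX1)
      (by have := hsmall hc; rw [← Nat.cast_one, ← Nat.cast_sub (by omega)]; exact_mod_cast this)
    linarith
  · rw [hE]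
    exact two_le_gallaiCoeff_mul_sub_cycle hk (by exact_mod_cast h3)

lemma degree_eq_sub_two_of_excess_lt (hk : 4 ≤ k) (hs : T.SimpleUnderlying) {X : Set T.V}
    (hB : (T.induced X).toSG.IsBrick)
    (hsmall : (T.induced X).toSG.IsBalancedComplete → X.ncard ≤ k - 1)
    (hlt : T.excess k X < gallaiCoeff k) {v : T.V} (hv : v ∈ X) :
    (T.induced X).degree v = k - 2 := by
  have hX1 : 1 ≤ X.ncard := (Set.ncard_pos X.toFinite).2 ⟨v, hv⟩
  unfold excess at hlt
  rcases hB.induced_cases hs with ⟨hc, hE⟩ | ⟨hdeg, hE, h3⟩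
  · have := sub_two_lt_of_gallaiCoeff_mul_lt hk (t := X.ncard) (by exact_mod_cast hX1)
      (by linarith)
    have : k - 2 < X.ncard := by
      rw [← Nat.cast_two, ← Nat.cast_sub (by omega)] at this
      exact_mod_cast this
    have := hsmall hc
    rw [hc.induced_degree hv]
    omega
  · rw [hE] at hlt
    rw [hdeg v hv, eq_four_of_gallaiCoeff_mul_lt hk (n := X.ncard) (by exact_mod_cast h3) hlt]

lemma unique_cross_of_degree_le_succ {X C : Set T.V} {v u : T.V}
    (hC : T.adjGraph.IsComponentOfDiff X v C)
    (hdeg : T.degree v ≤ (T.induced (insert v C)).degree v + 1) {e₀ : T.E}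
    (he₀ : T.ends e₀ = s(v, u)) (hu : u ∈ X \ insert v C) :
    ∀ e x y, x ∈ insert v C → y ∈ X \ insert v C → T.ends e = s(x, y) → e = e₀ := by
  rintro e x y (rfl | hx) hy hxy
  · exact eq_of_degree_le_succ hdeg (he₀ ▸ Sym2.mem_mk_left x u)
      (fun h => hu.2 ((mem_induced_edges he₀).1 h).2) (hxy ▸ Sym2.mem_mk_left x y)
      fun h => hy.2 ((mem_induced_edges hxy).1 h).2
  · exact absurd ((em (y = v)).elim .inl fun h => .inr (hC.closed x hx y hy.1 ⟨e, hxy⟩ h)) hy.2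

lemma isClosedExcept_of_unique_cross {X S : Set T.V} {a u : T.V} {e₀ : T.E}
    (he₀ : T.ends e₀ = s(a, u)) (hu : u ∈ X \ S)
    (huniq : ∀ e x y, x ∈ S → y ∈ X \ S → T.ends e = s(x, y) → e = e₀) :
    T.adjGraph.IsClosedExcept X S u := fun x hx y hy ⟨e, hxy⟩ hyu => by
  by_contra hyS
  have := hxy.symm.trans (huniq e x y hx ⟨hy, hyS⟩ hxy ▸ he₀)
  rcases Sym2.eq_iff.1 this with ⟨-, rfl⟩ | ⟨rfl, -⟩
  exacts [hyu rfl, hu.2 hx]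

section Induction

variable (hk : 4 ≤ k) (hconn : T.Connected) (hsimple : T.SimpleUnderlying)
  (hdeg : ∀ v, T.degree v ≤ k - 1) (hblocks : ∀ B : T.Subgraph, B.IsBlock → B.toSG.IsBrick)
include hk hconn hsimple hdeg hblocks

lemma two_le_excess_of_forall_not_isCutVertexOn
    (hnotK : ¬ (T.IsBalancedComplete ∧ Fintype.card T.V = k)) {X : Set T.V}
    (hX : T.adjGraph.IsBlockSubtree X) (hX2 : 1 < X.ncard)
    (hcut : ∀ w, ¬ T.adjGraph.IsCutVertexOn X w) : 2 ≤ T.excess k X := by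
  have hB := hblocks _ (isBlock_induced hX hX2 hcut)
  refine two_le_excess_of_isBrick hk hsimple hB hX.1.1 fun hc => ?_
  obtain ⟨x, hx⟩ := hX.1.1
  have hXk : X.ncard ≤ k := by
    have := hc.induced_degree hx
    have := (T.induced X).degree_le x
    have := hdeg x
    omega
  by_cases hXu : X = Set.univ
  · subst hXu
    have : (Set.univ : Set T.V).ncard ≠ k := fun h =>
      hnotK ⟨isBalancedComplete_of_induced_univ hc hsimple,
        by rw [← h, Set.ncard_univ, Nat.card_eq_fintype_card]⟩
    omega
  obtain ⟨z, hz⟩ := (Set.ne_univ_iff_exists_notMem X).1 hXu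
  obtain ⟨v, hvX, D, hD, hzD, hDX⟩ := hX.2 z hz
  obtain ⟨d, hdD, ⟨e, he⟩, -⟩ := (hconn.preconnected z v).some.exists_adj_of_isClosedExcept
    hD.closed (by simp) hzD (hDX.notMem_of_mem_right hvX)
  have hlt := degree_lt_degree_of_mem (H := T.induced X) (he ▸ Sym2.mem_mk_right d v)
    fun h => hDX.notMem_of_mem_right ((mem_induced_edges he).1 h).1 hdD
  have := hc.induced_degree hvX
  have := hdeg v
  omega

lemma two_le_excess_of_isCutVertexOn {X : Set T.V} (hX : T.adjGraph.IsBlockSubtree X)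
    (hcut : ∃ w, T.adjGraph.IsCutVertexOn X w)
    (ih : ∀ Y : Set T.V, Y.ncard < X.ncard → T.adjGraph.IsBlockSubtree Y → 2 ≤ T.excess k Y) :
    2 ≤ T.excess k X := by
  obtain ⟨v, C, hv, hC, hleaf⟩ := hX.1.exists_leaf hcut
  have hC1 : 0 < C.ncard := (Set.ncard_pos C.toFinite).2 hC.connectedOn.1
  have hB := hblocks _ (isBlock_induced (hC.isBlockSubtree_insert hconn hX)
    (by rw [Set.ncard_insert_of_notMem hC.notMem]; omega) (hC.not_isCutVertexOn_insert hleaf))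
  obtain ⟨u, hu, e₀, he₀⟩ := hC.exists_adj_sdiff_insert hX.1 hv
  have hv₀ : v ∈ T.ends e₀ := he₀ ▸ Sym2.mem_mk_left v u
  have he₀B : e₀ ∉ (T.induced (insert v C)).edges := fun h =>
    hu.2 ((mem_induced_edges he₀).1 h).2
  have hvB := degree_lt_degree_of_mem hv₀ he₀B
  have hsmall (h : (T.induced (insert v C)).toSG.IsBalancedComplete) :
      (insert v C).ncard ≤ k - 1 := by
    have := h.induced_degree (Set.mem_insert v C)
    have := hdeg v
    omega
  by_cases hexc : gallaiCoeff k ≤ T.excess k (insert v C)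
  · -- the leaf block pays for sharing `v`: delete `C`
    have hpt : v ∈ X \ C := ⟨hC.mem, hC.notMem⟩
    have := Set.ncard_sdiff_add_ncard_of_subset hC.subset
    have := ih _ (by omega) (hX.sdiff hconn hC.subset hpt hC.closed)
    rw [excess_eq_of_isClosedExcept hC.subset hpt hC.closed]
    linarith
  · -- otherwise `e₀` is the only edge leaving the block: delete all of it
    have hvdeg :=
      degree_eq_sub_two_of_excess_lt hk hsimple hB hsmall (not_le.1 hexc) (Set.mem_insert v C)
    have huniq := unique_cross_of_degree_le_succ hC (by have := hdeg v; omega) he₀ hu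
    have hcl := isClosedExcept_of_unique_cross he₀ hu huniq
    have := Set.ncard_sdiff_add_ncard_of_subset hC.insert_subset
    have := ih _ (by rw [Set.ncard_insert_of_notMem hC.notMem] at this; omega)
      (hX.sdiff hconn hC.insert_subset hu hcl)
    have := two_le_excess_of_isBrick hk hsimple hB ⟨v, Set.mem_insert v C⟩ hsmall
    rw [excess_eq_of_unique_cross hC.insert_subset (Set.mem_insert v C) hu he₀ huniq]
    linarith

lemma two_le_excess_of_isBlockSubtree (hnotK : ¬ (T.IsBalancedComplete ∧ Fintype.card T.V = k))
    (X : Set T.V) (hX : T.adjGraph.IsBlockSubtree X) : 2 ≤ T.excess k X := by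
  induction hn : X.ncard using Nat.strong_induction_on generalizing X with
  | _ n ih =>
  subst hn
  by_cases hcut : ∃ w, T.adjGraph.IsCutVertexOn X w
  · exact two_le_excess_of_isCutVertexOn hk hconn hsimple hdeg hblocks hX hcut
      fun Y hY hYX => ih _ hY Y hYX rfl
  have hX1 : 0 < X.ncard := (Set.ncard_pos X.toFinite).2 hX.1.1
  rcases (show X.ncard = 1 ∨ 1 < X.ncard by omega) with h | h
  · rw [excess_of_ncard_eq_one h]
    exact two_le_gallaiCoeff hk
  · exact two_le_excess_of_forall_not_isCutVertexOn hk hconn hsimple hdeg hblocks hnotK hX h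
      (not_exists.1 hcut)

end Induction

end SignedGraph

/-- Gallai-type bound for connected simple signed graphs all of
whose blocks are bricks. -/
theorem gallai_tree_bound (k : ℕ) (hk : 4 ≤ k) (T : SignedGraph)
    (hconn : T.Connected) (hsimple : T.SimpleUnderlying)
    (hdeg : T.maxDegree ≤ k - 1)
    (hblocks : ∀ B : T.Subgraph, B.IsBlock → B.toSG.IsBrick)
    (hnotK : ¬ (T.IsBalancedComplete ∧ Fintype.card T.V = k)) :
    (2 : ℚ) ≤ ((k : ℚ) - 2 + 2 / ((k : ℚ) - 1)) * (Fintype.card T.V : ℚ)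
      - 2 * (Fintype.card T.E : ℚ) := by
  have hdeg' : ∀ v, T.degree v ≤ k - 1 := fun v => (Finset.le_sup (Finset.mem_univ v)).trans hdeg
  have h := SignedGraph.two_le_excess_of_isBlockSubtree hk hconn hsimple hdeg' hblocks hnotK _
    hconn.isBlockSubtree_univ
  have hE : (T.induced Set.univ).edges = Set.univ := Set.eq_univ_of_forall fun _ _ _ => trivial
  rwa [SignedGraph.excess, hE, Set.ncard_univ, Set.ncard_univ, Nat.card_eq_fintype_card,
    Nat.card_eq_fintype_card] at h
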